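/- arXiv:2005.01554 — 4 statements merged into one kernel-verified Lean document; each statement's English description precedes it below -/
import Mathlib

section
/- Mass conservation for the one-step finite-volume scheme: if (c, μ) is a solution of the one-step scheme with previous volume fractions c⁰, then for each phase i ∈ {1,2} one has Σ_{K ∈ V} m_K c_{i,K} = Σ_{K ∈ V} m_K c⁰_{i,K}. -/
open Finset

/-- Logarithmic-mean edge value: `lm a b = a` if `a = b ≥ 0`, `0` if `min a b ≤ 0`,
and `(a - b)/(log a - log b)` otherwise. -/
noncomputable def lm (a b : ℝ) : ℝ :=
  if a = b ∧ 0 ≤ a then a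
  else if min a b ≤ 0 then 0
  else (a - b) / (Real.log a - Real.log b)

/-- Entropy function `H(c) = c log c - c + 1` (note `H 0 = 1` since `Real.log 0 = 0`). -/
noncomputable def ent (c : ℝ) : ℝ := c * Real.log c - c + 1

/-- Sum of `f L` over the neighbours `L` of `K`, i.e. over the `L` with `(K, L) ∈ E`. -/
noncomputable def nbrSum {V : Type*} [Fintype V] [DecidableEq V]
    (E : Finset (V × V)) (K : V) (f : V → ℝ) : ℝ :=
  ∑ L ∈ Finset.univ.filter (fun L => (K, L) ∈ E), f L

/-- Sum of a symmetric quantity `f K L` over the unordered edges `{K, L}`, where the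
edge set `E` is recorded as a symmetric finset of ordered pairs: each unordered edge
appears as both `(K, L)` and `(L, K)`, whence the division by `2`. -/
noncomputable def edgeSum {V : Type*} (E : Finset (V × V)) (f : V → V → ℝ) : ℝ :=
  (∑ p ∈ E, f p.1 p.2) / 2

/-- The one-step finite-volume scheme: equations (i) for both phases, (ii), (iii), (iv). -/
def OneStepScheme {V : Type*} [Fintype V] [DecidableEq V]
    (E : Finset (V × V)) (m : V → ℝ) (τ : V → V → ℝ)
    (Δt α κ η₁ η₂ θ₁ θ₂ : ℝ) (Ψ₁ Ψ₂ : V → ℝ)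
    (c₁₀ c₂₀ c₁ c₂ μ₁ μ₂ : V → ℝ) : Prop :=
  (∀ K : V,
    m K * (c₁ K - c₁₀ K) / Δt
      + nbrSum E K (fun L =>
          τ K L * (lm (c₁ K) (c₁ L) / η₁ * (μ₁ K + Ψ₁ K - μ₁ L - Ψ₁ L)
            + θ₁ * (c₁ K - c₁ L))) = 0) ∧
  (∀ K : V,
    m K * (c₂ K - c₂₀ K) / Δt
      + nbrSum E K (fun L =>
          τ K L * (lm (c₂ K) (c₂ L) / η₂ * (μ₂ K + Ψ₂ K - μ₂ L - Ψ₂ L)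
            + θ₂ * (c₂ K - c₂ L))) = 0) ∧
  (∀ K : V,
    μ₁ K - μ₂ K
      = α / m K * nbrSum E K (fun L => τ K L * (c₁ K - c₁ L))
        + κ * (1 - 2 * c₁₀ K)) ∧
  (∀ K : V, c₁ K + c₂ K = 1) ∧
  (∑ K : V, m K * (c₁ K * μ₁ K + c₂ K * μ₂ K) = 0)

/-- The discrete energy `𝔈(c)`. -/
noncomputable def discreteEnergy {V : Type*} [Fintype V]
    (E : Finset (V × V)) (m : V → ℝ) (τ : V → V → ℝ)
    (α κ η₁ η₂ θ₁ θ₂ : ℝ) (Ψ₁ Ψ₂ : V → ℝ) (c₁ c₂ : V → ℝ) : ℝ :=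
  α / 2 * edgeSum E (fun K L => τ K L * (c₁ K - c₁ L) ^ 2)
    + ∑ K : V, m K * (κ * c₁ K * c₂ K
        + (c₁ K * Ψ₁ K + θ₁ * η₁ * ent (c₁ K))
        + (c₂ K * Ψ₂ K + θ₂ * η₂ * ent (c₂ K)))

/-- The discrete dissipation `𝔇(c, μ)`. -/
noncomputable def discreteDissipation {V : Type*}
    (E : Finset (V × V)) (τ : V → V → ℝ)
    (η₁ η₂ θ₁ θ₂ : ℝ) (Ψ₁ Ψ₂ : V → ℝ) (c₁ c₂ μ₁ μ₂ : V → ℝ) : ℝ :=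
  edgeSum E (fun K L => τ K L * (lm (c₁ K) (c₁ L) / η₁)
      * (μ₁ K + Ψ₁ K + θ₁ * η₁ * Real.log (c₁ K)
          - μ₁ L - Ψ₁ L - θ₁ * η₁ * Real.log (c₁ L)) ^ 2)
  + edgeSum E (fun K L => τ K L * (lm (c₂ K) (c₂ L) / η₂)
      * (μ₂ K + Ψ₂ K + θ₂ * η₂ * Real.log (c₂ K)
          - μ₂ L - Ψ₂ L - θ₂ * η₂ * Real.log (c₂ L)) ^ 2)

/-!
Summing the cell equations of one phase over all cells, the flux terms cancel in pairs:
the flux from `K` to `L` is the negative of the flux from `L` to `K`, since `τ` and the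
logarithmic mean are symmetric. What remains is `Σ_K m_K (c_K - c⁰_K) / Δt = 0`.
-/

lemma lm_comm (a b : ℝ) : lm a b = lm b a := by
  unfold lm
  rcases eq_or_ne a b with rfl | hab
  · rfl
  · simp only [hab, hab.symm, false_and, if_false, min_comm b a]
    split_ifs
    · rfl
    · rw [← neg_sub a b, ← neg_sub (Real.log a), neg_div_neg_eq]

section FluxSums

variable {V : Type*} [Fintype V] [DecidableEq V] (E : Finset (V × V))

lemma sum_nbrSum (F : V → V → ℝ) :
    ∑ K : V, nbrSum E K (F K) = ∑ p ∈ E, F p.1 p.2 := by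
  simp only [nbrSum, Finset.sum_filter]
  rw [← Finset.sum_product', Finset.univ_product_univ, ← Finset.sum_filter]
  congr 1
  ext p
  simp

lemma sum_nbrSum_eq_zero_of_antisymm (hEsym : ∀ K L : V, (K, L) ∈ E ↔ (L, K) ∈ E)
    {F : V → V → ℝ} (hF : ∀ K L, F L K = -F K L) :
    ∑ K : V, nbrSum E K (F K) = 0 := by
  have hswap : ∑ p ∈ E, F p.1 p.2 = ∑ p ∈ E, -F p.1 p.2 :=
    Finset.sum_equiv (Equiv.prodComm V V) (fun p => hEsym p.1 p.2) (fun p _ => hF p.2 p.1)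
  rw [Finset.sum_neg_distrib] at hswap
  rw [sum_nbrSum]
  linarith

lemma sum_mul_eq_of_euler_step (hEsym : ∀ K L : V, (K, L) ∈ E ↔ (L, K) ∈ E)
    {m c c₀ : V → ℝ} {Δt : ℝ} (hΔt : Δt ≠ 0) {F : V → V → ℝ}
    (hF : ∀ K L, F L K = -F K L)
    (hstep : ∀ K, m K * (c K - c₀ K) / Δt + nbrSum E K (F K) = 0) :
    ∑ K : V, m K * c K = ∑ K : V, m K * c₀ K := by
  have htotal := Finset.sum_eq_zero (s := Finset.univ) fun K _ => hstep K
  rw [Finset.sum_add_distrib, sum_nbrSum_eq_zero_of_antisymm E hEsym hF, add_zero,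
    ← Finset.sum_div, div_eq_zero_iff, or_iff_left hΔt] at htotal
  simpa only [mul_sub, Finset.sum_sub_distrib, sub_eq_zero] using htotal

end FluxSums

lemma phase_flux_antisymm {V : Type*} {τ : V → V → ℝ} (hτsym : ∀ K L, τ K L = τ L K)
    (η θ : ℝ) (c μ Ψ : V → ℝ) (K L : V) :
    τ L K * (lm (c L) (c K) / η * (μ L + Ψ L - μ K - Ψ K) + θ * (c L - c K))
      = -(τ K L * (lm (c K) (c L) / η * (μ K + Ψ K - μ L - Ψ L) + θ * (c K - c L))) := by
  rw [hτsym L K, lm_comm (c L)]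
  ring

theorem mass_conservation_one_step_general
    {V : Type*} [Fintype V] [DecidableEq V]
    (E : Finset (V × V)) (m : V → ℝ) (τ : V → V → ℝ)
    (Δt α κ η₁ η₂ θ₁ θ₂ : ℝ) (Ψ₁ Ψ₂ : V → ℝ)
    (c₁₀ c₂₀ c₁ c₂ μ₁ μ₂ : V → ℝ)
    (hEsym : ∀ K L : V, (K, L) ∈ E ↔ (L, K) ∈ E)
    (hτsym : ∀ K L, τ K L = τ L K)
    (hΔt : 0 < Δt)
    (hsol : OneStepScheme E m τ Δt α κ η₁ η₂ θ₁ θ₂ Ψ₁ Ψ₂ c₁₀ c₂₀ c₁ c₂ μ₁ μ₂)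
    :
    (∑ K : V, m K * c₁ K = ∑ K : V, m K * c₁₀ K) ∧
    (∑ K : V, m K * c₂ K = ∑ K : V, m K * c₂₀ K) := by
  obtain ⟨hstep₁, hstep₂, -⟩ := hsol
  exact
    ⟨sum_mul_eq_of_euler_step E hEsym hΔt.ne' (phase_flux_antisymm hτsym η₁ θ₁ c₁ μ₁ Ψ₁) hstep₁,
      sum_mul_eq_of_euler_step E hEsym hΔt.ne' (phase_flux_antisymm hτsym η₂ θ₂ c₂ μ₂ Ψ₂) hstep₂⟩

/-- Mass conservation for the one-step finite-volume scheme. -/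
theorem mass_conservation_one_step
    {V : Type*} [Fintype V] [DecidableEq V] [Nonempty V]
    (E : Finset (V × V)) (m : V → ℝ) (τ : V → V → ℝ)
    (Δt α κ η₁ η₂ θ₁ θ₂ : ℝ) (Ψ₁ Ψ₂ : V → ℝ)
    (c₁₀ c₂₀ c₁ c₂ μ₁ μ₂ : V → ℝ)
    (hEirr : ∀ K : V, (K, K) ∉ E)
    (hEsym : ∀ K L : V, (K, L) ∈ E ↔ (L, K) ∈ E)
    (hconn : (SimpleGraph.fromRel (fun K L : V => (K, L) ∈ E)).Connected)
    (hm : ∀ K, 0 < m K)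
    (hτpos : ∀ K L, (K, L) ∈ E → 0 < τ K L)
    (hτsym : ∀ K L, τ K L = τ L K)
    (hΔt : 0 < Δt) (hα : 0 < α) (hκ : 0 < κ)
    (hη₁ : 0 < η₁) (hη₂ : 0 < η₂) (hθ₁ : 0 < θ₁) (hθ₂ : 0 < θ₂)
    (hc₁₀ : ∀ K, c₁₀ K ∈ Set.Icc (0:ℝ) 1)
    (hc₂₀ : ∀ K, c₂₀ K ∈ Set.Icc (0:ℝ) 1)
    (hc₀sum : ∀ K, c₁₀ K + c₂₀ K = 1)
    (hsol : OneStepScheme E m τ Δt α κ η₁ η₂ θ₁ θ₂ Ψ₁ Ψ₂ c₁₀ c₂₀ c₁ c₂ μ₁ μ₂)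
    :
    (∑ K : V, m K * c₁ K = ∑ K : V, m K * c₁₀ K) ∧
    (∑ K : V, m K * c₂ K = ∑ K : V, m K * c₂₀ K) :=
  mass_conservation_one_step_general E m τ Δt α κ η₁ η₂ θ₁ θ₂ Ψ₁ Ψ₂ c₁₀ c₂₀ c₁ c₂ μ₁ μ₂ hEsym hτsym
    hΔt hsol
end

section
/- Positivity for the one-step finite-volume scheme: if moreover Σ_{K ∈ V} m_K c⁰_{i,K} > 0 for both i = 1 and i = 2, then any solution (c, μ) of the one-step scheme satisfies 0 < c_{i,K} < 1 for every K ∈ V and every i ∈ {1,2}. -/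
open Finset

/-!
Discrete minimum principle. Suppose some `c_{i,K} ≤ 0` and let `K` be a cell where `c_i` is
minimal. There `lm (c_{i,K}) · = 0`, so equation (i) at `K` reduces to a time increment plus
diffusive fluxes `θ τ (c_{i,K} - c_{i,L})`, all `≤ 0` because `c⁰_i ≥ 0`; hence all vanish:
`c_{i,K} = c⁰_{i,K}` and the neighbours of `K` are minimal as well. By connectedness `c_i`
is a nonpositive constant equal to `c⁰_i`, contradicting `Σ m_K c⁰_{i,K} > 0`. The upper
bounds follow from `c₁ + c₂ = 1`.
-/

theorem lm_eq_zero_of_nonpos_left {a : ℝ} (b : ℝ) (ha : a ≤ 0) : lm a b = 0 := by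
  unfold lm
  split_ifs with h₁ h₂
  · exact le_antisymm ha h₁.2
  · rfl
  · exact absurd ((min_le_left a b).trans ha) h₂

theorem SimpleGraph.Preconnected.forall_of_forall_adj {V : Type*} {G : SimpleGraph V}
    (hG : G.Preconnected) {P : V → Prop} (hP : ∀ u v, G.Adj u v → P u → P v)
    {u : V} (hu : P u) (v : V) : P v := by
  obtain ⟨w⟩ := hG u v
  induction w with
  | nil => exact hu
  | cons hadj _ ih => exact ih (hP _ _ hadj hu)

section MassBalance

variable {V : Type*} [Fintype V] [DecidableEq V]
  {E : Finset (V × V)} {m : V → ℝ} {τ : V → V → ℝ} {Δt η θ : ℝ} {Ψ c₀ c μ : V → ℝ}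

variable (E m τ Δt η θ Ψ c₀ c μ) in
/-- Equation (i) of the scheme for a single phase. -/
def MassBalance : Prop :=
  ∀ K, m K * (c K - c₀ K) / Δt
    + nbrSum E K (fun L => τ K L * (lm (c K) (c L) / η * (μ K + Ψ K - μ L - Ψ L)
        + θ * (c K - c L))) = 0

theorem MassBalance.eq_diffusion_of_nonpos (h : MassBalance E m τ Δt η θ Ψ c₀ c μ)
    {K : V} (hK : c K ≤ 0) :
    m K * (c K - c₀ K) / Δt + θ * nbrSum E K (fun L => τ K L * (c K - c L)) = 0 := by
  rw [← h K, nbrSum, nbrSum, mul_sum]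
  congr 1
  refine sum_congr rfl fun L _ => ?_
  rw [lm_eq_zero_of_nonpos_left _ hK]
  ring

theorem MassBalance.eq_of_min_of_nonpos (h : MassBalance E m τ Δt η θ Ψ c₀ c μ)
    (hm : ∀ K, 0 < m K) (hτpos : ∀ K L, (K, L) ∈ E → 0 < τ K L) (hΔt : 0 < Δt) (hθ : 0 < θ)
    (hc₀ : ∀ K, 0 ≤ c₀ K) {K : V} (hmin : ∀ L, c K ≤ c L) (hK : c K ≤ 0) :
    c K = c₀ K ∧ ∀ L, (K, L) ∈ E → c L = c K := by
  have hflux : ∀ L ∈ univ.filter (fun L => (K, L) ∈ E), τ K L * (c K - c L) ≤ 0 :=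
    fun L hL => mul_nonpos_of_nonneg_of_nonpos (hτpos K L (mem_filter.mp hL).2).le
      (sub_nonpos.mpr (hmin L))
  have htime : m K * (c K - c₀ K) / Δt ≤ 0 :=
    div_nonpos_of_nonpos_of_nonneg
      (mul_nonpos_of_nonneg_of_nonpos (hm K).le (by linarith [hc₀ K])) hΔt.le
  have hdiff : θ * nbrSum E K (fun L => τ K L * (c K - c L)) ≤ 0 :=
    mul_nonpos_of_nonneg_of_nonpos hθ.le (sum_nonpos hflux)
  have hbal := h.eq_diffusion_of_nonpos hK
  have htime₀ : m K * (c K - c₀ K) / Δt = 0 := by linarith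
  have hdiff₀ : θ * nbrSum E K (fun L => τ K L * (c K - c L)) = 0 := by linarith
  refine ⟨?_, fun L hL => ?_⟩
  · simpa [hΔt.ne', (hm K).ne', sub_eq_zero] using htime₀
  · have hsum : nbrSum E K (fun L => τ K L * (c K - c L)) = 0 := by
      simpa [hθ.ne'] using hdiff₀
    have hL₀ := (sum_eq_zero_iff_of_nonpos hflux).mp hsum L (mem_filter.mpr ⟨mem_univ L, hL⟩)
    simp only [mul_eq_zero, (hτpos K L hL).ne', false_or, sub_eq_zero] at hL₀
    exact hL₀.symm

theorem MassBalance.pos (h : MassBalance E m τ Δt η θ Ψ c₀ c μ)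
    (hEsym : ∀ K L : V, (K, L) ∈ E ↔ (L, K) ∈ E)
    (hconn : (SimpleGraph.fromRel (fun K L : V => (K, L) ∈ E)).Connected)
    (hm : ∀ K, 0 < m K) (hτpos : ∀ K L, (K, L) ∈ E → 0 < τ K L) (hΔt : 0 < Δt) (hθ : 0 < θ)
    (hc₀ : ∀ K, 0 ≤ c₀ K) (hmass : 0 < ∑ K, m K * c₀ K) (K : V) : 0 < c K := by
  by_contra! hK
  obtain ⟨Kmin, -, hKmin⟩ := exists_min_image univ c ⟨K, mem_univ K⟩
  have hmin_nonpos : c Kmin ≤ 0 := (hKmin K (mem_univ K)).trans hK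
  have hconst : ∀ L, c L = c Kmin := by
    refine hconn.preconnected.forall_of_forall_adj (fun u v huv hu => ?_) rfl
    have huv' : (u, v) ∈ E := huv.2.elim id (hEsym v u).mp
    have hu_min : ∀ L, c u ≤ c L := fun L => hu ▸ hKmin L (mem_univ L)
    rw [(h.eq_of_min_of_nonpos hm hτpos hΔt hθ hc₀ hu_min (hu ▸ hmin_nonpos)).2 v huv', hu]
  have hinit : ∀ L, c₀ L = c Kmin := by
    intro L
    have hL_min : ∀ L', c L ≤ c L' := fun L' => by rw [hconst L, hconst L']
    rw [← hconst L]
    exact (h.eq_of_min_of_nonpos hm hτpos hΔt hθ hc₀ hL_min (hconst L ▸ hmin_nonpos)).1.symm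
  have : ∑ L, m L * c₀ L ≤ 0 := sum_nonpos fun L _ => by
    rw [hinit L]
    exact mul_nonpos_of_nonneg_of_nonpos (hm L).le hmin_nonpos
  linarith

end MassBalance

theorem positivity_one_step_general
    {V : Type*} [Fintype V] [DecidableEq V]
    (E : Finset (V × V)) (m : V → ℝ) (τ : V → V → ℝ)
    (Δt α κ η₁ η₂ θ₁ θ₂ : ℝ) (Ψ₁ Ψ₂ : V → ℝ)
    (c₁₀ c₂₀ c₁ c₂ μ₁ μ₂ : V → ℝ)
    (hEsym : ∀ K L : V, (K, L) ∈ E ↔ (L, K) ∈ E)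
    (hconn : (SimpleGraph.fromRel (fun K L : V => (K, L) ∈ E)).Connected)
    (hm : ∀ K, 0 < m K)
    (hτpos : ∀ K L, (K, L) ∈ E → 0 < τ K L)
    (hΔt : 0 < Δt)
    (hθ₁ : 0 < θ₁) (hθ₂ : 0 < θ₂)
    (hc₁₀ : ∀ K, c₁₀ K ∈ Set.Icc (0:ℝ) 1)
    (hc₂₀ : ∀ K, c₂₀ K ∈ Set.Icc (0:ℝ) 1)
    (hsol : OneStepScheme E m τ Δt α κ η₁ η₂ θ₁ θ₂ Ψ₁ Ψ₂ c₁₀ c₂₀ c₁ c₂ μ₁ μ₂)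
    (hmass₁ : 0 < ∑ K : V, m K * c₁₀ K)
    (hmass₂ : 0 < ∑ K : V, m K * c₂₀ K) :
    ∀ K : V, (0 < c₁ K ∧ c₁ K < 1) ∧ (0 < c₂ K ∧ c₂ K < 1) := by
  obtain ⟨hbal₁, hbal₂, -, hpartition, -⟩ := hsol
  have hpos₁ : ∀ K, 0 < c₁ K := MassBalance.pos hbal₁ hEsym hconn hm hτpos hΔt hθ₁
    (fun K => (hc₁₀ K).1) hmass₁
  have hpos₂ : ∀ K, 0 < c₂ K := MassBalance.pos hbal₂ hEsym hconn hm hτpos hΔt hθ₂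
    (fun K => (hc₂₀ K).1) hmass₂
  intro K
  have := hpartition K
  exact ⟨⟨hpos₁ K, by linarith [hpos₂ K]⟩, ⟨hpos₂ K, by linarith [hpos₁ K]⟩⟩

/-- Positivity for the one-step finite-volume scheme. -/
theorem positivity_one_step
    {V : Type*} [Fintype V] [DecidableEq V] [Nonempty V]
    (E : Finset (V × V)) (m : V → ℝ) (τ : V → V → ℝ)
    (Δt α κ η₁ η₂ θ₁ θ₂ : ℝ) (Ψ₁ Ψ₂ : V → ℝ)
    (c₁₀ c₂₀ c₁ c₂ μ₁ μ₂ : V → ℝ)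
    (hEirr : ∀ K : V, (K, K) ∉ E)
    (hEsym : ∀ K L : V, (K, L) ∈ E ↔ (L, K) ∈ E)
    (hconn : (SimpleGraph.fromRel (fun K L : V => (K, L) ∈ E)).Connected)
    (hm : ∀ K, 0 < m K)
    (hτpos : ∀ K L, (K, L) ∈ E → 0 < τ K L)
    (hτsym : ∀ K L, τ K L = τ L K)
    (hΔt : 0 < Δt) (hα : 0 < α) (hκ : 0 < κ)
    (hη₁ : 0 < η₁) (hη₂ : 0 < η₂) (hθ₁ : 0 < θ₁) (hθ₂ : 0 < θ₂)
    (hc₁₀ : ∀ K, c₁₀ K ∈ Set.Icc (0:ℝ) 1)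
    (hc₂₀ : ∀ K, c₂₀ K ∈ Set.Icc (0:ℝ) 1)
    (hc₀sum : ∀ K, c₁₀ K + c₂₀ K = 1)
    (hsol : OneStepScheme E m τ Δt α κ η₁ η₂ θ₁ θ₂ Ψ₁ Ψ₂ c₁₀ c₂₀ c₁ c₂ μ₁ μ₂)
    (hmass₁ : 0 < ∑ K : V, m K * c₁₀ K)
    (hmass₂ : 0 < ∑ K : V, m K * c₂₀ K) :
    ∀ K : V, (0 < c₁ K ∧ c₁ K < 1) ∧ (0 < c₂ K ∧ c₂ K < 1) :=
  positivity_one_step_general E m τ Δt α κ η₁ η₂ θ₁ θ₂ Ψ₁ Ψ₂ c₁₀ c₂₀ c₁ c₂ μ₁ μ₂ hEsym hconn hm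
    hτpos hΔt hθ₁ hθ₂ hc₁₀ hc₂₀ hsol hmass₁ hmass₂
end

section
/- Edge oscillation bound under an inverse CFL condition: suppose c : V → [0,1] satisfies, for every K ∈ V, ( Σ_{L : {K,L} ∈ E} τ_{KL} (c_K − c_L) )² ≤ C m_K / Δt, and suppose the inverse CFL condition Δt / m_K ≥ γ C / τ⋆² holds for every K ∈ V. Then |c_K − c_L| ≤ 1 − δ for every edge {K,L} ∈ E, where δ := min{ τ⋆ / ((ℓ⋆ − 1) τ* + τ⋆), τ⋆ (1 − 1/√γ) / ((ℓ⋆ − 1) τ* + τ⋆) } ∈ (0,1). -/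
/-!
Suppose `c K - c L₀ > 1 - δ` on an edge `{K, L₀}`. Since `c ∈ [0,1]`, this forces
`c K > 1 - δ`, so every other flux term `τ_{KL} (c K - c L)` is at least `-τ* δ`, while the
term of `L₀` exceeds `τ⋆ (1 - δ)`. Summing over the at most `ℓ⋆` neighbours, the flux at `K`
exceeds `τ⋆ - δ ((ℓ⋆ - 1) τ* + τ⋆) ≥ τ⋆ / √γ`, the choice of `δ` being exactly what makes the
last inequality hold. But the oscillation bound combined with the inverse CFL condition gives
`flux² ≤ C m_K / Δt ≤ τ⋆² / γ`, a contradiction.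
-/

open Finset

noncomputable def edgeGap (τl τu : ℝ) (ℓ : ℕ) (γ : ℝ) : ℝ :=
  min (τl / (((ℓ : ℝ) - 1) * τu + τl)) (τl * (1 - 1 / Real.sqrt γ) / (((ℓ : ℝ) - 1) * τu + τl))

section edgeGap

variable {τl τu γ : ℝ} {ℓ : ℕ}

lemma edgeGap_denom_pos (hτl : 0 < τl) (hτ : τl ≤ τu) (hℓ : 1 ≤ ℓ) :
    0 < ((ℓ : ℝ) - 1) * τu + τl := by
  have : (1 : ℝ) ≤ ℓ := by exact_mod_cast hℓ
  nlinarith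

lemma edgeGap_pos (hτl : 0 < τl) (hτ : τl ≤ τu) (hℓ : 1 ≤ ℓ) (hγ : 1 < γ) :
    0 < edgeGap τl τu ℓ γ := by
  have hD := edgeGap_denom_pos hτl hτ hℓ
  have hinv : 1 / Real.sqrt γ < 1 := by
    rw [div_lt_one (by positivity)]
    exact Real.lt_sqrt_of_sq_lt (by linarith)
  exact lt_min (div_pos hτl hD) (div_pos (mul_pos hτl (by linarith)) hD)

lemma edgeGap_lt_one (hτl : 0 < τl) (hτ : τl ≤ τu) (hℓ : 2 ≤ ℓ) :
    edgeGap τl τu ℓ γ < 1 := by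
  have hD := edgeGap_denom_pos hτl hτ (show 1 ≤ ℓ by omega)
  have : (2 : ℝ) ≤ ℓ := by exact_mod_cast hℓ
  refine (min_le_left _ _).trans_lt ?_
  rw [div_lt_one hD]
  nlinarith

lemma edgeGap_mul_denom_le (hτl : 0 < τl) (hτ : τl ≤ τu) (hℓ : 1 ≤ ℓ) :
    edgeGap τl τu ℓ γ * (((ℓ : ℝ) - 1) * τu + τl) ≤ τl - τl / Real.sqrt γ := by
  rw [← le_div_iff₀ (edgeGap_denom_pos hτl hτ hℓ)]
  refine (min_le_right _ _).trans_eq ?_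
  ring

end edgeGap

lemma le_div_sqrt_of_sq_le_of_inverse_CFL {s C m Δt γ τ : ℝ} (hm : 0 < m) (hΔt : 0 < Δt)
    (hγ : 0 < γ) (hτ : 0 < τ) (hs : s ^ 2 ≤ C * m / Δt) (hCFL : γ * C / τ ^ 2 ≤ Δt / m) :
    s ≤ τ / Real.sqrt γ := by
  have hbound : C * m / Δt ≤ τ ^ 2 / γ := by
    rw [div_le_div_iff₀ (by positivity) hm] at hCFL
    rw [div_le_div_iff₀ hΔt hγ]
    nlinarith
  calc s ≤ |s| := le_abs_self s
    _ ≤ Real.sqrt (τ ^ 2 / γ) := Real.abs_le_sqrt (hs.trans hbound)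
    _ = τ / Real.sqrt γ := by rw [Real.sqrt_div' _ hγ.le, Real.sqrt_sq hτ.le]

lemma sub_mul_lt_sum_of_lt_of_forall_ge {ι : Type*} [DecidableEq ι] {S : Finset ι}
    {f : ι → ℝ} {a : ι} {A B : ℝ} {n : ℕ} (ha : a ∈ S) (hcard : S.card ≤ n) (hB : 0 ≤ B)
    (hfa : A < f a) (hf : ∀ i ∈ S.erase a, -B ≤ f i) :
    A - ((n : ℝ) - 1) * B < ∑ i ∈ S, f i := by
  have hcard' : ((S.erase a).card : ℝ) ≤ (n : ℝ) - 1 := by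
    rw [card_erase_of_mem ha, Nat.cast_sub (card_pos.2 ⟨a, ha⟩)]
    push_cast
    exact sub_le_sub_right (Nat.cast_le.2 hcard) 1
  have hrest : ((S.erase a).card : ℝ) * -B ≤ ∑ i ∈ S.erase a, f i := by
    simpa only [nsmul_eq_mul] using card_nsmul_le_sum _ _ _ hf
  rw [← add_sum_erase S f ha]
  nlinarith

lemma neg_mul_le_mul_of_neg_le {w x τu δ : ℝ} (hw : 0 ≤ w) (hwτ : w ≤ τu) (hδ : 0 ≤ δ)
    (hx : -δ ≤ x) : -(τu * δ) ≤ w * x := by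
  rcases le_total 0 x with hx0 | hx0 <;> nlinarith

lemma sub_le_one_sub_of_weighted_sum_le {ι : Type*} [DecidableEq ι] {S : Finset ι}
    {w c : ι → ℝ} {k a : ι} {τl τu F δ : ℝ} {ℓ : ℕ} (ha : a ∈ S)
    (hc : ∀ i, c i ∈ Set.Icc (0 : ℝ) 1) (hτl : 0 < τl) (hw : ∀ i ∈ S, τl ≤ w i ∧ w i ≤ τu)
    (hcard : S.card ≤ ℓ) (hδ : 0 ≤ δ) (hδ1 : δ ≤ 1)
    (hgap : δ * (((ℓ : ℝ) - 1) * τu + τl) ≤ τl - F)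
    (hsum : ∑ i ∈ S, w i * (c k - c i) ≤ F) :
    c k - c a ≤ 1 - δ := by
  by_contra! hfar
  have hck : 1 - δ < c k := by linarith [(hc a).1]
  have hτu : 0 ≤ τu := hτl.le.trans ((hw a ha).1.trans (hw a ha).2)
  have hfirst : τl * (1 - δ) < w a * (c k - c a) := by
    nlinarith [(hw a ha).1, mul_lt_mul_of_pos_left hfar (hτl.trans_le (hw a ha).1)]
  have hothers : ∀ i ∈ S.erase a, -(τu * δ) ≤ w i * (c k - c i) := fun i hi =>
    have hwi := hw i (mem_of_mem_erase hi)
    neg_mul_le_mul_of_neg_le (hτl.le.trans hwi.1) hwi.2 hδ (by linarith [(hc i).2])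
  have hlower := sub_mul_lt_sum_of_lt_of_forall_ge ha hcard (mul_nonneg hτu hδ) hfirst hothers
  nlinarith

theorem edge_oscillation_inverse_CFL_general
    {V : Type*} [Fintype V] [DecidableEq V]
    (E : Finset (V × V)) (m : V → ℝ) (τ : V → V → ℝ)
    (Δt C γ τstar τstarU : ℝ) (ℓstar : ℕ)
    (hEsym : ∀ K L : V, (K, L) ∈ E ↔ (L, K) ∈ E)
    (hm : ∀ K, 0 < m K)
    (hτstar : 0 < τstar) (hττ : τstar ≤ τstarU)
    (hτbounds : ∀ K L, (K, L) ∈ E → τstar ≤ τ K L ∧ τ K L ≤ τstarU)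
    (hℓstar : 3 ≤ ℓstar)
    (hdeg : ∀ K : V, (Finset.univ.filter (fun L => (K, L) ∈ E)).card ≤ ℓstar)
    (hΔt : 0 < Δt) (hγ : 1 < γ)
    (c : V → ℝ) (hc : ∀ K, c K ∈ Set.Icc (0:ℝ) 1)
    (hosc : ∀ K : V, (nbrSum E K (fun L => τ K L * (c K - c L))) ^ 2 ≤ C * m K / Δt)
    (hCFL : ∀ K : V, γ * C / τstar ^ 2 ≤ Δt / m K) :
    let δ : ℝ := min (τstar / (((ℓstar : ℝ) - 1) * τstarU + τstar))
      (τstar * (1 - 1 / Real.sqrt γ) / (((ℓstar : ℝ) - 1) * τstarU + τstar))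
    0 < δ ∧ δ < 1 ∧ ∀ K L : V, (K, L) ∈ E → |c K - c L| ≤ 1 - δ := by
  show 0 < edgeGap τstar τstarU ℓstar γ ∧ edgeGap τstar τstarU ℓstar γ < 1 ∧ _
  have hpos : 0 < edgeGap τstar τstarU ℓstar γ := edgeGap_pos hτstar hττ (by omega) hγ
  have hlt : edgeGap τstar τstarU ℓstar γ < 1 := edgeGap_lt_one hτstar hττ (by omega)
  have hflux (K : V) : nbrSum E K (fun L => τ K L * (c K - c L)) ≤ τstar / Real.sqrt γ :=
    le_div_sqrt_of_sq_le_of_inverse_CFL (hm K) hΔt (by linarith) hτstar (hosc K) (hCFL K)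
  have hedge (K L : V) (hKL : (K, L) ∈ E) : c K - c L ≤ 1 - edgeGap τstar τstarU ℓstar γ :=
    sub_le_one_sub_of_weighted_sum_le (by simpa using hKL) hc hτstar
      (fun i hi => hτbounds K i (by simpa using hi)) (hdeg K) hpos.le hlt.le
      (edgeGap_mul_denom_le hτstar hττ (by omega)) (hflux K)
  exact ⟨hpos, hlt, fun K L hKL =>
    abs_sub_le_iff.2 ⟨hedge K L hKL, hedge L K ((hEsym K L).1 hKL)⟩⟩

/-- Edge oscillation bound under an inverse CFL condition.  The edge set `E` is
recorded as a symmetric finset of ordered pairs of distinct cells; `τstar` is the lower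
bound `τ⋆`, `τstarU` the upper bound `τ*`, and `ℓstar` the maximal number of edges per cell. -/
theorem edge_oscillation_inverse_CFL
    {V : Type*} [Fintype V] [DecidableEq V] [Nonempty V]
    (E : Finset (V × V)) (m : V → ℝ) (τ : V → V → ℝ)
    (Δt C γ τstar τstarU : ℝ) (ℓstar : ℕ)
    (hEirr : ∀ K : V, (K, K) ∉ E)
    (hEsym : ∀ K L : V, (K, L) ∈ E ↔ (L, K) ∈ E)
    (hm : ∀ K, 0 < m K)
    (hτsym : ∀ K L, τ K L = τ L K)
    (hτstar : 0 < τstar) (hττ : τstar ≤ τstarU)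
    (hτbounds : ∀ K L, (K, L) ∈ E → τstar ≤ τ K L ∧ τ K L ≤ τstarU)
    (hℓstar : 3 ≤ ℓstar)
    (hdeg : ∀ K : V, (Finset.univ.filter (fun L => (K, L) ∈ E)).card ≤ ℓstar)
    (hΔt : 0 < Δt) (hC : 0 < C) (hγ : 1 < γ)
    (c : V → ℝ) (hc : ∀ K, c K ∈ Set.Icc (0:ℝ) 1)
    (hosc : ∀ K : V, (nbrSum E K (fun L => τ K L * (c K - c L))) ^ 2 ≤ C * m K / Δt)
    (hCFL : ∀ K : V, γ * C / τstar ^ 2 ≤ Δt / m K) :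
    let δ : ℝ := min (τstar / (((ℓstar : ℝ) - 1) * τstarU + τstar))
      (τstar * (1 - 1 / Real.sqrt γ) / (((ℓstar : ℝ) - 1) * τstarU + τstar))
    0 < δ ∧ δ < 1 ∧ ∀ K L : V, (K, L) ∈ E → |c K - c L| ≤ 1 - δ :=
  edge_oscillation_inverse_CFL_general E m τ Δt C γ τstar τstarU ℓstar hEsym hm hτstar hττ hτbounds
    hℓstar hdeg hΔt hγ c hc hosc hCFL
end

section
/- Range and vanishing set of the sum of logarithmic-mean edge values: let φ(a,b) := lm(a,b) + lm(1 − a, 1 − b) for (a,b) ∈ [0,1]². Then φ is continuous on [0,1]², satisfies 0 ≤ φ(a,b) ≤ 1 for all (a,b) ∈ [0,1]², and φ(a,b) = 0 if and only if (a,b) = (0,1) or (a,b) = (1,0). -/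
open Real Filter Topology

theorem two_mul_sub_div_add_le_log_sub_log {x y : ℝ} (hx : 0 < x) (hxy : x ≤ y) :
    2 * (y - x) / (x + y) ≤ log y - log x := by
  have ha : 0 ≤ y / x - 1 := by rw [sub_nonneg, one_le_div hx]; exact hxy
  have h := le_hasSum (hasSum_log_one_add ha) 0 fun k _ => by positivity
  rw [add_sub_cancel, log_div (by linarith) hx.ne'] at h
  refine le_of_eq_of_le ?_ h
  simp only [CharP.cast_eq_zero, mul_zero, zero_add, div_one, mul_one, pow_one]
  field_simp
  ring

theorem log_sub_log_le_sub_div {x y : ℝ} (hx : 0 < x) (hy : 0 < y) :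
    log y - log x ≤ (y - x) / x := by
  have := log_le_sub_one_of_pos (div_pos hy hx)
  rw [log_div hy.ne' hx.ne'] at this
  convert this using 1
  field_simp

theorem lm_self {x : ℝ} (hx : 0 ≤ x) : lm x x = x := if_pos ⟨rfl, hx⟩

theorem lm_of_min_nonpos {x y : ℝ} (h : min x y ≤ 0) : lm x y = 0 := by
  unfold lm
  split_ifs with hxy
  · obtain ⟨rfl, hx⟩ := hxy
    exact le_antisymm (by simpa using h) hx
  · rfl

theorem lm_of_pos_of_ne {x y : ℝ} (hx : 0 < x) (hy : 0 < y) (hxy : x ≠ y) :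
    lm x y = (x - y) / (log x - log y) :=
  (if_neg fun h => hxy h.1).trans (if_neg (not_le.2 (lt_min hx hy)))

theorem lm_of_pos_of_lt {x y : ℝ} (hx : 0 < x) (hxy : x < y) :
    lm x y = (y - x) / (log y - log x) := by
  rw [lm_of_pos_of_ne hx (hx.trans hxy) hxy.ne, ← neg_div_neg_eq, neg_sub, neg_sub]

theorem lm_comm_s9 (x y : ℝ) : lm x y = lm y x := by
  by_cases h : 0 < min x y
  · rw [lt_min_iff] at h
    obtain rfl | hxy := eq_or_ne x y
    · rfl
    rw [lm_of_pos_of_ne h.1 h.2 hxy, lm_of_pos_of_ne h.2 h.1 hxy.symm, ← neg_div_neg_eq,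
      neg_sub, neg_sub]
  · rw [lm_of_min_nonpos (not_lt.1 h), lm_of_min_nonpos (by rwa [min_comm, ← not_lt])]

theorem le_lm_of_lt {x y : ℝ} (hx : 0 < x) (hxy : x < y) : x ≤ lm x y := by
  have hlog : 0 < log y - log x := sub_pos.2 (log_lt_log hx hxy)
  rw [lm_of_pos_of_lt hx hxy, le_div_iff₀ hlog, ← le_div_iff₀' hx]
  exact log_sub_log_le_sub_div hx (hx.trans hxy)

theorem lm_le_add_div_two_of_lt {x y : ℝ} (hx : 0 < x) (hxy : x < y) :
    lm x y ≤ (x + y) / 2 := by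
  have hlog : 0 < log y - log x := sub_pos.2 (log_lt_log hx hxy)
  rw [lm_of_pos_of_lt hx hxy, div_le_iff₀ hlog, ← div_le_iff₀' (by linarith)]
  refine le_of_eq_of_le ?_ (two_mul_sub_div_add_le_log_sub_log hx hxy.le)
  field_simp

theorem min_le_lm {x y : ℝ} (hx : 0 < x) (hy : 0 < y) : min x y ≤ lm x y := by
  rcases lt_trichotomy x y with h | rfl | h
  · rw [min_eq_left h.le]; exact le_lm_of_lt hx h
  · rw [min_self, lm_self hx.le]
  · rw [min_eq_right h.le, lm_comm_s9]; exact le_lm_of_lt hy h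

theorem lm_le_add_div_two {x y : ℝ} (hx : 0 ≤ x) (hy : 0 ≤ y) : lm x y ≤ (x + y) / 2 := by
  by_cases h : min x y ≤ 0
  · rw [lm_of_min_nonpos h]; positivity
  rw [not_le, lt_min_iff] at h
  rcases lt_trichotomy x y with hxy | rfl | hxy
  · exact lm_le_add_div_two_of_lt h.1 hxy
  · rw [lm_self hx]; linarith
  · rw [lm_comm_s9, add_comm]; exact lm_le_add_div_two_of_lt h.2 hxy

theorem lm_nonneg (x y : ℝ) : 0 ≤ lm x y := by
  by_cases h : min x y ≤ 0
  · rw [lm_of_min_nonpos h]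
  rw [not_le, lt_min_iff] at h
  exact (lt_min h.1 h.2).le.trans (min_le_lm h.1 h.2)

theorem lm_eq_zero_iff {x y : ℝ} : lm x y = 0 ↔ min x y ≤ 0 := by
  refine ⟨fun h => ?_, lm_of_min_nonpos⟩
  by_contra! hpos
  exact (hpos.trans_le (min_le_lm (lt_min_iff.1 hpos).1 (lt_min_iff.1 hpos).2)).ne' h

theorem lm_lt_of_lt_mul_exp {x y C ε : ℝ} (hε : 0 < ε) (hy : y ≤ C)
    (hx : x < ε * exp (-(C / ε))) : lm x y < ε := by
  by_cases h : min x y ≤ 0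
  · rw [lm_of_min_nonpos h]; exact hε
  obtain ⟨hx0, hy0⟩ := lt_min_iff.1 (not_le.1 h)
  have hC : 0 < C := hy0.trans_le hy
  have hδ : ε * exp (-(C / ε)) < ε :=
    mul_lt_of_lt_one_right hε (exp_lt_one_iff.2 (neg_lt_zero.2 (by positivity)))
  rcases le_or_gt y ε with hyε | hyε
  · linarith [lm_le_add_div_two hx0.le hy0.le]
  have hxy : x < y := by linarith
  -- `log x < log ε - C / ε < log y - C / ε` while `y - x < C`
  have hlog : C / ε < log y - log x := by
    have := log_lt_log hx0 hx
    rw [log_mul hε.ne' (exp_pos _).ne', log_exp] at this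
    linarith [log_lt_log hε hyε]
  rw [lm_of_pos_of_lt hx0 hxy, div_lt_iff₀ ((div_pos hC hε).trans hlog)]
  calc y - x < C := by linarith
    _ = ε * (C / ε) := by field_simp
    _ < ε * (log y - log x) := by gcongr

theorem tendsto_lm_zero_of_fst_nonpos {a : ℝ} (ha : a ≤ 0) (b : ℝ) :
    Tendsto (fun p : ℝ × ℝ => lm p.1 p.2) (𝓝 (a, b)) (𝓝 0) := by
  refine tendsto_order.2 ⟨fun e he => .of_forall fun p => he.trans_le (lm_nonneg _ _),
    fun ε hε => ?_⟩
  have hx : ∀ᶠ p : ℝ × ℝ in 𝓝 (a, b), p.1 < ε * exp (-((b + 1) / ε)) :=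
    continuous_fst.continuousAt.eventually_lt continuousAt_const (ha.trans_lt (by positivity))
  have hy : ∀ᶠ p : ℝ × ℝ in 𝓝 (a, b), p.2 < b + 1 :=
    continuous_snd.continuousAt.eventually_lt continuousAt_const (lt_add_one b)
  filter_upwards [hx, hy] with p hpx hpy
  exact lm_lt_of_lt_mul_exp hε hpy.le hpx

theorem continuousAt_lm_of_pos_of_ne {a b : ℝ} (ha : 0 < a) (hb : 0 < b) (hab : a ≠ b) :
    ContinuousAt (fun p : ℝ × ℝ => lm p.1 p.2) (a, b) := by
  have hformula : ContinuousAt (fun p : ℝ × ℝ => (p.1 - p.2) / (log p.1 - log p.2)) (a, b) := by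
    have hlog : log a - log b ≠ 0 := sub_ne_zero.2 fun h => hab (log_injOn_pos ha hb h)
    fun_prop (disch := first | exact hlog | positivity)
  refine hformula.congr ?_
  have hnear : ∀ᶠ p : ℝ × ℝ in 𝓝 (a, b), 0 < p.1 ∧ 0 < p.2 ∧ p.1 ≠ p.2 :=
    (continuousAt_const.eventually_lt continuousAt_fst ha).and
      ((continuousAt_const.eventually_lt continuousAt_snd hb).and
        ((isOpen_ne_fun continuous_fst continuous_snd).eventually_mem hab))
  filter_upwards [hnear] with p ⟨hp1, hp2, hp⟩
  exact (lm_of_pos_of_ne hp1 hp2 hp).symm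

theorem continuousAt_lm_self {a : ℝ} (ha : 0 < a) :
    ContinuousAt (fun p : ℝ × ℝ => lm p.1 p.2) (a, a) := by
  have hpos : ∀ᶠ p : ℝ × ℝ in 𝓝 (a, a), 0 < p.1 ∧ 0 < p.2 :=
    (continuousAt_const.eventually_lt continuousAt_fst ha).and
      (continuousAt_const.eventually_lt continuousAt_snd ha)
  have hmin : Tendsto (fun p : ℝ × ℝ => min p.1 p.2) (𝓝 (a, a)) (𝓝 a) := by
    simpa using (continuous_fst.min continuous_snd).tendsto (a, a)
  have hmean : Tendsto (fun p : ℝ × ℝ => (p.1 + p.2) / 2) (𝓝 (a, a)) (𝓝 a) := by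
    simpa using ((continuous_fst.add continuous_snd).div_const 2).tendsto (a, a)
  rw [ContinuousAt, lm_self ha.le]
  exact tendsto_of_tendsto_of_tendsto_of_le_of_le' hmin hmean
    (hpos.mono fun p hp => min_le_lm hp.1 hp.2)
    (hpos.mono fun p hp => lm_le_add_div_two hp.1.le hp.2.le)

theorem continuous_lm : Continuous fun p : ℝ × ℝ => lm p.1 p.2 := by
  rw [continuous_iff_continuousAt]
  rintro ⟨a, b⟩
  rcases le_or_gt a 0 with ha | ha
  · rw [ContinuousAt, lm_of_min_nonpos (min_le_of_left_le ha)]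
    exact tendsto_lm_zero_of_fst_nonpos ha b
  rcases le_or_gt b 0 with hb | hb
  · rw [ContinuousAt, lm_of_min_nonpos (min_le_of_right_le hb)]
    simpa only [Function.comp_def, Prod.fst_swap, Prod.snd_swap, lm_comm_s9 _ _] using
      (tendsto_lm_zero_of_fst_nonpos hb a).comp (continuous_swap.tendsto (a, b))
  rcases eq_or_ne a b with rfl | hab
  · exact continuousAt_lm_self ha
  · exact continuousAt_lm_of_pos_of_ne ha hb hab

/-- Range and vanishing set of `φ(a,b) = lm(a,b) + lm(1-a,1-b)` on the unit square:
`φ` is continuous on `[0,1]²`, takes values in `[0,1]`, and vanishes exactly at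
`(0,1)` and `(1,0)`. -/
theorem lm_sum_continuous_range_zero_set :
    ContinuousOn (fun p : ℝ × ℝ => lm p.1 p.2 + lm (1 - p.1) (1 - p.2))
      (Set.Icc (0:ℝ) 1 ×ˢ Set.Icc (0:ℝ) 1) ∧
    (∀ a b : ℝ, a ∈ Set.Icc (0:ℝ) 1 → b ∈ Set.Icc (0:ℝ) 1 →
      0 ≤ lm a b + lm (1 - a) (1 - b) ∧ lm a b + lm (1 - a) (1 - b) ≤ 1) ∧
    (∀ a b : ℝ, a ∈ Set.Icc (0:ℝ) 1 → b ∈ Set.Icc (0:ℝ) 1 →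
      (lm a b + lm (1 - a) (1 - b) = 0 ↔ (a = 0 ∧ b = 1) ∨ (a = 1 ∧ b = 0))) := by
  refine ⟨?_, ?_, ?_⟩
  · have hreflect : Continuous fun p : ℝ × ℝ => (1 - p.1, 1 - p.2) := by fun_prop
    exact (continuous_lm.add (continuous_lm.comp hreflect)).continuousOn
  · rintro a b ⟨ha0, ha1⟩ ⟨hb0, hb1⟩
    refine ⟨add_nonneg (lm_nonneg _ _) (lm_nonneg _ _), ?_⟩
    linarith [lm_le_add_div_two ha0 hb0, lm_le_add_div_two (sub_nonneg.2 ha1) (sub_nonneg.2 hb1)]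
  · rintro a b ⟨ha0, ha1⟩ ⟨hb0, hb1⟩
    rw [add_eq_zero_iff_of_nonneg (lm_nonneg _ _) (lm_nonneg _ _), lm_eq_zero_iff,
      lm_eq_zero_iff, min_le_iff, min_le_iff]
    grind
end
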